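/- arXiv:1205.4469 — 5 statements merged into one kernel-verified Lean document; each statement's English description precedes it below -/
import Mathlib

section
/- Let A be a commutative ring and Q : ℕ → ℕ → A a function with Q a b = -Q b a for all a, b. Define, for each finite list I of natural numbers of even length 2m+2 (m ≥ 1), the element p(I) recursively by: for I = [i0,i1,i2,i3], p(I) = Q i0 i1 * Q i2 i3 - Q i0 i2 * Q i1 i3 + Q i0 i3 * Q i1 i2, and for longer I = i0 :: rest, p(I) = Σ_{r=1}^{2m+1} (-1)^{r+1} * Q i0 i_r * p(I_r), where I_r is obtained from I by deleting i0 and i_r. Then swapping the first two entries of I negates p: p(i0 :: i1 :: tail) = - p(i1 :: i0 :: tail). -/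
open Finset

def pf {A : Type*} [CommRing A] (Q : ℕ → ℕ → A) : List ℕ → A
  | [i0, i1, i2, i3] => Q i0 i1 * Q i2 i3 - Q i0 i2 * Q i1 i3 + Q i0 i3 * Q i1 i2
  | i0 :: rest =>
      ∑ r ∈ Finset.range rest.length,
        (-1 : A) ^ r * Q i0 (rest.getD r 0) * pf Q (rest.eraseIdx r)
  | _ => 0
termination_by l => l.length
decreasing_by
  simp only [List.length_cons]
  exact Nat.lt_succ_of_le (List.length_eraseIdx_le _ _)

/-- Uniform auxiliary Pfaffian with `pf2 [] = 1`. -/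
def pf2 {A : Type*} [CommRing A] (Q : ℕ → ℕ → A) : List ℕ → A
  | [] => 1
  | i0 :: rest =>
      ∑ r ∈ Finset.range rest.length,
        (-1 : A) ^ r * Q i0 (rest.getD r 0) * pf2 Q (rest.eraseIdx r)
termination_by l => l.length
decreasing_by
  simp only [List.length_cons]
  exact Nat.lt_succ_of_le (List.length_eraseIdx_le _ _)

lemma pf2_cons {A : Type*} [CommRing A] (Q : ℕ → ℕ → A) (i0 : ℕ) (rest : List ℕ) :
    pf2 Q (i0 :: rest) = ∑ r ∈ Finset.range rest.length,
        (-1 : A) ^ r * Q i0 (rest.getD r 0) * pf2 Q (rest.eraseIdx r) := by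
  rw [pf2]

lemma eraseIdx_eraseIdx (l : List ℕ) : ∀ a b : ℕ, a ≤ b →
    (l.eraseIdx a).eraseIdx b = (l.eraseIdx (b + 1)).eraseIdx a := by
  induction l with
  | nil => simp
  | cons x l ih =>
    intro a b hab
    cases a with
    | zero => simp [List.eraseIdx_cons_succ]
    | succ a =>
      cases b with
      | zero => omega
      | succ b =>
        simp only [List.eraseIdx_cons_succ]
        rw [ih a b (by omega)]

lemma getD_eraseIdx (l : List ℕ) (r s : ℕ) (hr : r < l.length) (hs : s < l.length - 1) :
    (l.eraseIdx r).getD s 0 = l.getD (if s < r then s else s + 1) 0 := by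
  have hlen : (l.eraseIdx r).length = l.length - 1 := by
    rw [List.length_eraseIdx]; simp [hr]
  by_cases h : s < r
  · rw [List.getD_eq_getElem _ _ (by omega : s < (l.eraseIdx r).length),
      List.getElem_eraseIdx, dif_pos h, if_pos h, List.getD_eq_getElem _ _ (by omega)]
  · rw [List.getD_eq_getElem _ _ (by omega : s < (l.eraseIdx r).length),
      List.getElem_eraseIdx, dif_neg h, if_neg h, List.getD_eq_getElem _ _ (by omega)]

lemma key_cancel {A : Type*} [CommRing A] (Q : ℕ → ℕ → A) (i0 i1 : ℕ) (l : List ℕ) :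
    ∑ p ∈ Finset.range l.length ×ˢ Finset.range (l.length - 1),
      ((-1 : A) ^ (p.1 + 1) * Q i0 (l.getD p.1 0) *
          ((-1 : A) ^ p.2 * Q i1 ((l.eraseIdx p.1).getD p.2 0) *
            pf2 Q ((l.eraseIdx p.1).eraseIdx p.2))
        + (-1 : A) ^ (p.1 + 1) * Q i1 (l.getD p.1 0) *
          ((-1 : A) ^ p.2 * Q i0 ((l.eraseIdx p.1).getD p.2 0) *
            pf2 Q ((l.eraseIdx p.1).eraseIdx p.2))) = 0 := by
  apply Finset.sum_involution
    (g := fun p _ => if p.2 < p.1 then (p.2, p.1 - 1) else (p.2 + 1, p.1))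
  · rintro ⟨r, s⟩ hp
    rw [Finset.mem_product, Finset.mem_range, Finset.mem_range] at hp
    obtain ⟨hr, hs⟩ := hp
    by_cases h : s < r
    · obtain ⟨r, rfl⟩ : ∃ r', r = r' + 1 := ⟨r - 1, by omega⟩
      simp only [if_pos h, Nat.add_sub_cancel]
      have e1 : (l.eraseIdx (r + 1)).getD s 0 = l.getD s 0 := by
        rw [getD_eraseIdx l (r + 1) s hr hs, if_pos h]
      have e2 : (l.eraseIdx s).getD r 0 = l.getD (r + 1) 0 := by
        rw [getD_eraseIdx l s r (by omega) (by omega), if_neg (by omega)]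
      have e3 : (l.eraseIdx s).eraseIdx r = (l.eraseIdx (r + 1)).eraseIdx s :=
        eraseIdx_eraseIdx l s r (by omega)
      rw [e1, e2, e3]
      ring
    · simp only [if_neg h]
      have e1 : (l.eraseIdx r).getD s 0 = l.getD (s + 1) 0 := by
        rw [getD_eraseIdx l r s hr hs, if_neg h]
      have e2 : (l.eraseIdx (s + 1)).getD r 0 = l.getD r 0 := by
        rw [getD_eraseIdx l (s + 1) r (by omega) (by omega), if_pos (by omega)]
      have e3 : (l.eraseIdx r).eraseIdx s = (l.eraseIdx (s + 1)).eraseIdx r :=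
        eraseIdx_eraseIdx l r s (by omega)
      rw [e1, e2, e3]
      ring
  · rintro ⟨r, s⟩ hp _
    by_cases h : s < r
    · simp only [if_pos h, Prod.mk.injEq, ne_eq]
      omega
    · simp only [if_neg h, Prod.mk.injEq, ne_eq]
      omega
  · rintro ⟨r, s⟩ hp
    dsimp only
    by_cases h : s < r
    · simp only [if_pos h]
      rw [if_neg (by omega : ¬ r - 1 < s)]
      simp only [Prod.mk.injEq]
      exact ⟨by omega, trivial⟩
    · simp only [if_neg h]
      rw [if_pos (by omega : r < s + 1)]
      simp only [Prod.mk.injEq, Nat.add_sub_cancel]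
  · rintro ⟨r, s⟩ hp
    simp only [Finset.mem_product, Finset.mem_range] at hp ⊢
    by_cases h : s < r
    · simp only [if_pos h]; omega
    · simp only [if_neg h]; omega

lemma pf2_swap {A : Type*} [CommRing A] (Q : ℕ → ℕ → A) (hQ : ∀ a b, Q a b = -Q b a)
    (i0 i1 : ℕ) (tail : List ℕ) :
    pf2 Q (i0 :: i1 :: tail) = - pf2 Q (i1 :: i0 :: tail) := by
  have expand : ∀ j0 j1 : ℕ, pf2 Q (j0 :: j1 :: tail)
      = Q j0 j1 * pf2 Q tail
        + ∑ p ∈ Finset.range tail.length ×ˢ Finset.range (tail.length - 1),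
            (-1 : A) ^ (p.1 + 1) * Q j0 (tail.getD p.1 0) *
              ((-1 : A) ^ p.2 * Q j1 ((tail.eraseIdx p.1).getD p.2 0) *
                pf2 Q ((tail.eraseIdx p.1).eraseIdx p.2)) := by
    intro j0 j1
    rw [pf2_cons]
    simp only [List.length_cons]
    rw [Finset.sum_range_succ']
    simp only [List.getD_cons_succ, List.getD_cons_zero, List.eraseIdx_cons_succ,
      List.eraseIdx_cons_zero, pow_zero, one_mul]
    rw [add_comm]
    congr 1
    refine Eq.trans ?_ (Finset.sum_product' (Finset.range tail.length)
      (Finset.range (tail.length - 1)) (fun r s =>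
        (-1 : A) ^ (r + 1) * Q j0 (tail.getD r 0) *
          ((-1 : A) ^ s * Q j1 ((tail.eraseIdx r).getD s 0) *
            pf2 Q ((tail.eraseIdx r).eraseIdx s)))).symm
    refine Finset.sum_congr rfl fun r hr => ?_
    rw [Finset.mem_range] at hr
    have hlen : (tail.eraseIdx r).length = tail.length - 1 := by
      rw [List.length_eraseIdx]; simp [hr]
    rw [pf2_cons, hlen, Finset.mul_sum]
  rw [expand, expand]
  have h2 := key_cancel Q i0 i1 tail
  rw [Finset.sum_add_distrib] at h2
  linear_combination h2 + pf2 Q tail * hQ i0 i1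

lemma pf_eq_pf2 {A : Type*} [CommRing A] (Q : ℕ → ℕ → A) (l : List ℕ)
    (hev : l.length % 2 = 0) (h4 : 4 ≤ l.length) : pf Q l = pf2 Q l := by
  suffices H : ∀ n, ∀ l : List ℕ, l.length ≤ n → l.length % 2 = 0 → 4 ≤ l.length →
      pf Q l = pf2 Q l from H l.length l le_rfl hev h4
  intro n
  induction n with
  | zero => intro l hl _ h4; omega
  | succ n ih =>
    intro l hl hev h4
    match l with
    | i0 :: rest =>
      by_cases hr3 : rest.length = 3
      · obtain ⟨a, b, c, rfl⟩ : ∃ a b c, rest = [a, b, c] := by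
          match rest, hr3 with
          | [a, b, c], _ => exact ⟨a, b, c, rfl⟩
        rw [pf]
        simp [pf2, Finset.sum_range_succ]
        ring
      · rw [pf]
        · rw [pf2_cons]
          refine Finset.sum_congr rfl fun r hr => ?_
          rw [Finset.mem_range] at hr
          have hlen : (rest.eraseIdx r).length = rest.length - 1 := by
            rw [List.length_eraseIdx]; simp [hr]
          have hll : (i0 :: rest).length = rest.length + 1 := rfl
          rw [ih (rest.eraseIdx r) (by simp at hl; omega)
            (by simp at hev; omega) (by simp at h4; omega)]
        · intro a b c hEq
          apply hr3
          rw [hEq]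
          rfl

/-- Swapping the first two entries of a list of even length `≥ 4` negates the
Pfaffian-type polynomial. -/
theorem pf_swap_head {A : Type*} [CommRing A] (Q : ℕ → ℕ → A)
    (hQ : ∀ a b, Q a b = -Q b a)
    (i0 i1 : ℕ) (tail : List ℕ) (heven : tail.length % 2 = 0) (hlen : 2 ≤ tail.length) :
    pf Q (i0 :: i1 :: tail) = - pf Q (i1 :: i0 :: tail) := by
  rw [pf_eq_pf2 Q _ (by simp [Nat.add_mod, heven]) (by simp; omega),
    pf_eq_pf2 Q _ (by simp [Nat.add_mod, heven]) (by simp; omega)]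
  exact pf2_swap Q hQ i0 i1 tail
end

section
/- Let i0, i1, i2, i3 be real numbers such that 1 + i_a + i_b ≠ 0 for all pairs a < b and 2 + i0 + i1 + i2 + i3 ≠ 0. Set s_k = (-1)^k for k = 0,1,2,3 (so s0 = s2 = 1, s1 = s3 = -1). Then the six-term sum (1/4)·[ (s0 s2 - s1 s2 - s0 s3 + s1 s3)/(1+i0+i1) + (-s0 s1 + s1 s2 + s0 s3 - s2 s3)/(1+i0+i2) + (s0 s1 - s0 s2 - s1 s3 + s2 s3)/(1+i0+i3) + (-s0 s2 + s0 s1 - s1 s3 + s2 s3)/(1+i1+i2) + (s1 s2 + s0 s3 - s2 s3 - s0 s1)/(1+i1+i3) + (-s1 s2 + s1 s3 - s0 s3 + s0 s2)/(1+i2+i3) ] equals (2 + i0+i1+i2+i3)(i0 - i2)(i1 - i3) / ((1+i0+i1)(1+i1+i2)(1+i0+i3)(1+i2+i3)). -/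
/-- The six-term remainder formula `R_1(I)` collapses to a closed form when the
signs are `s k = (-1)^k`. -/
theorem remainder_R1_closed_form (i0 i1 i2 i3 : ℝ)
    (h01 : 1 + i0 + i1 ≠ 0) (h02 : 1 + i0 + i2 ≠ 0) (h03 : 1 + i0 + i3 ≠ 0)
    (h12 : 1 + i1 + i2 ≠ 0) (h13 : 1 + i1 + i3 ≠ 0) (h23 : 1 + i2 + i3 ≠ 0)
    (hsum : 2 + i0 + i1 + i2 + i3 ≠ 0)
    (s : Fin 4 → ℝ) (hs : ∀ k : Fin 4, s k = (-1 : ℝ) ^ (k : ℕ)) :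
    (1 / 4 : ℝ) *
      ((s 0 * s 2 - s 1 * s 2 - s 0 * s 3 + s 1 * s 3) / (1 + i0 + i1)
        + (-(s 0 * s 1) + s 1 * s 2 + s 0 * s 3 - s 2 * s 3) / (1 + i0 + i2)
        + (s 0 * s 1 - s 0 * s 2 - s 1 * s 3 + s 2 * s 3) / (1 + i0 + i3)
        + (-(s 0 * s 2) + s 0 * s 1 - s 1 * s 3 + s 2 * s 3) / (1 + i1 + i2)
        + (s 1 * s 2 + s 0 * s 3 - s 2 * s 3 - s 0 * s 1) / (1 + i1 + i3)
        + (-(s 1 * s 2) + s 1 * s 3 - s 0 * s 3 + s 0 * s 2) / (1 + i2 + i3)) =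
    (2 + i0 + i1 + i2 + i3) * (i0 - i2) * (i1 - i3) /
      ((1 + i0 + i1) * (1 + i1 + i2) * (1 + i0 + i3) * (1 + i2 + i3)) := by
  have e0 : s 0 = 1 := by rw [hs 0]; norm_num
  have e1 : s 1 = -1 := by rw [hs 1]; norm_num
  have e2 : s 2 = 1 := by rw [hs 2]; norm_num
  have e3 : s 3 = -1 := by
    rw [hs 3, show ((3 : Fin 4) : ℕ) = 3 from rfl]; norm_num
  rw [e0, e1, e2, e3]
  have hD : (1 + i0 + i1) * (1 + i1 + i2) * (1 + i0 + i3) * (1 + i2 + i3) ≠ 0 :=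
    mul_ne_zero (mul_ne_zero (mul_ne_zero h01 h12) h03) h23
  trans (1 / (1 + i0 + i1) - 1 / (1 + i0 + i3) - 1 / (1 + i1 + i2) + 1 / (1 + i2 + i3))
  · ring
  · rw [eq_div_iff hD]
    field_simp
    ring
end

section
/- For every integer n ≥ 1, F_n evaluated at i_k = 2k and j_k = 2k+1 (for k = 0,…,n) equals n! · (n+1)^2 · (∏_{0 ≤ k < l ≤ n} (k-l)^2) / (2^n · ∏_{0 ≤ k ≤ n, 0 ≤ l ≤ n} (1+k+l)). In particular this value is strictly positive, hence nonzero. -/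
open Finset

/-- The closed formula `F_n` for the remainder `R_n(I)`. -/
noncomputable def F (n : ℕ) (i j : ℕ → ℝ) : ℝ :=
  (Nat.factorial n : ℝ) * ((n : ℝ) + 1 + ∑ k ∈ Finset.range (n + 1), (i k + j k)) *
    (∏ k ∈ Finset.range (n + 1), ∏ l ∈ Finset.Ioo k (n + 1), ((i k - i l) * (j k - j l))) /
    (∏ k ∈ Finset.range (n + 1), ∏ l ∈ Finset.range (n + 1), (1 + i k + j l))

lemma aux_sum (m : ℕ) : ∑ k ∈ Finset.range m, (2 * (k : ℝ) + (2 * (k : ℝ) + 1)) =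
    2 * (m : ℝ) ^ 2 - m := by
  induction m with
  | zero => simp
  | succ m ih =>
    rw [Finset.sum_range_succ, ih]
    push_cast
    ring

/-- The value of `F_n` at `i_k = 2k`, `j_k = 2k+1`, i.e. the remainder `R_0` of the
minimal-weight singular vector `P_0`; it is strictly positive, hence nonzero. -/
theorem F_at_minimal_weight (n : ℕ) (hn : 1 ≤ n) :
    F n (fun k => 2 * (k : ℝ)) (fun k => 2 * (k : ℝ) + 1) =
      (Nat.factorial n : ℝ) * ((n : ℝ) + 1) ^ 2 *
        (∏ k ∈ Finset.range (n + 1), ∏ l ∈ Finset.Ioo k (n + 1), ((k : ℝ) - l) ^ 2) /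
        ((2 : ℝ) ^ n *
          ∏ k ∈ Finset.range (n + 1), ∏ l ∈ Finset.range (n + 1), (1 + (k : ℝ) + l)) ∧
    0 < F n (fun k => 2 * (k : ℝ)) (fun k => 2 * (k : ℝ) + 1) := by
  set P : ℝ := ∏ k ∈ Finset.range (n + 1), ∏ l ∈ Finset.Ioo k (n + 1), ((k : ℝ) - l) ^ 2 with hP
  set Q : ℝ := ∏ k ∈ Finset.range (n + 1), ∏ l ∈ Finset.range (n + 1), (1 + (k : ℝ) + l) with hQ
  have hQpos : 0 < Q := by
    apply Finset.prod_pos; intro k _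
    apply Finset.prod_pos; intro l _
    positivity
  have hPpos : 0 < P := by
    apply Finset.prod_pos; intro k _
    apply Finset.prod_pos; intro l hl
    have hk : k < l := (Finset.mem_Ioo.mp hl).1
    have hne : (k : ℝ) - l ≠ 0 := by
      have : (k : ℝ) < l := by exact_mod_cast hk
      linarith
    positivity
  set S : ℕ := ∑ k ∈ Finset.range (n + 1), (n - k) with hS
  have hS2 : (n + 1) ^ 2 = n + 1 + 2 * S := by
    have h1 : ∑ j ∈ Finset.range (n + 1), (n + 1 - 1 - j) = ∑ j ∈ Finset.range (n + 1), j :=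
      Finset.sum_range_reflect (fun j => j) (n + 1)
    have h2 : (∑ i ∈ Finset.range (n + 1), i) * 2 = (n + 1) * (n + 1 - 1) :=
      Finset.sum_range_id_mul_two (n + 1)
    have hS' : S = ∑ j ∈ Finset.range (n + 1), j := by
      rw [hS, ← h1]
      exact Finset.sum_congr rfl fun k _ => by omega
    have h2' : (∑ i ∈ Finset.range (n + 1), i) * 2 = (n + 1) * n := by simpa using h2
    have : 2 * S = (n + 1) * n := by rw [hS', mul_comm]; exact h2'
    rw [this]; ring
  -- compute the sum part
  have hsum : ((n : ℝ) + 1 + ∑ k ∈ Finset.range (n + 1), (2 * (k : ℝ) + (2 * (k : ℝ) + 1)))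
      = 2 * ((n : ℝ) + 1) ^ 2 := by
    rw [aux_sum (n + 1)]
    push_cast
    ring
  -- compute the numerator product
  have hprod : (∏ k ∈ Finset.range (n + 1), ∏ l ∈ Finset.Ioo k (n + 1),
      ((2 * (k : ℝ) - 2 * l) * (2 * (k : ℝ) + 1 - (2 * (l : ℝ) + 1))))
      = (4 : ℝ) ^ S * P := by
    have step : ∀ k ∈ Finset.range (n + 1),
        (∏ l ∈ Finset.Ioo k (n + 1),
          ((2 * (k : ℝ) - 2 * l) * (2 * (k : ℝ) + 1 - (2 * (l : ℝ) + 1))))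
        = (4 : ℝ) ^ (n - k) * ∏ l ∈ Finset.Ioo k (n + 1), ((k : ℝ) - l) ^ 2 := by
      intro k hk
      calc (∏ l ∈ Finset.Ioo k (n + 1),
              ((2 * (k : ℝ) - 2 * l) * (2 * (k : ℝ) + 1 - (2 * (l : ℝ) + 1))))
          = ∏ l ∈ Finset.Ioo k (n + 1), ((4 : ℝ) * ((k : ℝ) - l) ^ 2) :=
            Finset.prod_congr rfl fun l _ => by ring
        _ = (4 : ℝ) ^ (n - k) * ∏ l ∈ Finset.Ioo k (n + 1), ((k : ℝ) - l) ^ 2 := by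
            rw [Finset.prod_mul_distrib, Finset.prod_const, Nat.card_Ioo]
            congr 2
            omega
    rw [Finset.prod_congr rfl step, Finset.prod_mul_distrib, Finset.prod_pow_eq_pow_sum]
  -- compute the denominator product
  have hden : (∏ k ∈ Finset.range (n + 1), ∏ l ∈ Finset.range (n + 1),
      (1 + 2 * (k : ℝ) + (2 * (l : ℝ) + 1))) = (2 : ℝ) ^ ((n + 1) ^ 2) * Q := by
    have step : ∀ k ∈ Finset.range (n + 1),
        (∏ l ∈ Finset.range (n + 1), (1 + 2 * (k : ℝ) + (2 * (l : ℝ) + 1)))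
        = (2 : ℝ) ^ (n + 1) * ∏ l ∈ Finset.range (n + 1), (1 + (k : ℝ) + l) := by
      intro k hk
      calc (∏ l ∈ Finset.range (n + 1), (1 + 2 * (k : ℝ) + (2 * (l : ℝ) + 1)))
          = ∏ l ∈ Finset.range (n + 1), ((2 : ℝ) * (1 + (k : ℝ) + l)) :=
            Finset.prod_congr rfl fun l _ => by ring
        _ = (2 : ℝ) ^ (n + 1) * ∏ l ∈ Finset.range (n + 1), (1 + (k : ℝ) + l) := by
            rw [Finset.prod_mul_distrib, Finset.prod_const, Finset.card_range]
    rw [Finset.prod_congr rfl step, Finset.prod_mul_distrib, Finset.prod_const,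
      Finset.card_range, ← pow_mul]
    congr 1
    ring
  have h4 : (4 : ℝ) ^ S = (2 : ℝ) ^ (2 * S) := by
    rw [show (4 : ℝ) = 2 ^ 2 by norm_num, ← pow_mul]
  have heq : F n (fun k => 2 * (k : ℝ)) (fun k => 2 * (k : ℝ) + 1)
      = (Nat.factorial n : ℝ) * ((n : ℝ) + 1) ^ 2 * P / ((2 : ℝ) ^ n * Q) := by
    simp only [F]
    rw [hsum, hprod, hden, h4]
    rw [div_eq_div_iff (by positivity) (by positivity)]
    rw [hS2, pow_add]
    ring
  refine ⟨heq, ?_⟩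
  rw [heq]
  have hfac : (0 : ℝ) < (Nat.factorial n : ℝ) := by
    exact_mod_cast Nat.factorial_pos n
  apply div_pos
  · apply mul_pos (mul_pos hfac (by positivity)) hPpos
  · exact mul_pos (by positivity) hQpos
end

section
/- Fix n ≥ 2 and real numbers k_0,…,k_{n-1}, l_0,…,l_{n-1} with all 1 + k_r + l_s ≠ 0 and n + Σ_{r=0}^{n-1}(k_r + l_r) ≠ 0. Then, as x → ∞ along the reals, F_n(k_0,…,k_{n-1},x ; l_0,…,l_{n-1},x+1) tends to (n / (n + Σ_{r=0}^{n-1}(k_r + l_r))) · F_{n-1}(k_0,…,k_{n-1} ; l_0,…,l_{n-1}). -/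
/-!
Appending the pair `(x, x + 1)` adds to the numerator of `F_n` the new Vandermonde factors
`∏ r, (k_r - x)(l_r - x - 1)` and to its denominator a new row and column of the Cauchy matrix,
`∏ r, (2 + k_r + x)(1 + x + l_r)` and `2 + 2x`. So `F_n` at the extended lists is
`(n / (n + Σ)) · F_{n-1}` times a product of ratios of affine functions of `x`, each tending to
the ratio of its leading coefficients: `1` for the first one, `-1` for the others, which come
in pairs.
-/

open Finset Filter

open scoped Topology Nat

theorem Finset.prod_range_succ_prod_Ioo {M : Type*} [CommMonoid M] (n : ℕ) (g : ℕ → ℕ → M) :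
    ∏ a ∈ range (n + 1), ∏ b ∈ Ioo a (n + 1), g a b =
      (∏ a ∈ range n, ∏ b ∈ Ioo a n, g a b) * ∏ a ∈ range n, g a n := by
  rw [prod_range_succ, Ioo_add_one_right_eq_Ioc, Ioc_self, prod_empty, mul_one,
    ← prod_mul_distrib]
  refine prod_congr rfl fun a ha => ?_
  rw [Ioo_add_one_right_eq_Ioc, ← Ioo_insert_right (mem_range.1 ha),
    prod_insert right_notMem_Ioo, mul_comm]

theorem Finset.prod_range_succ_prod_range_succ {M : Type*} [CommMonoid M] (n : ℕ)
    (g : ℕ → ℕ → M) :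
    ∏ a ∈ range (n + 1), ∏ b ∈ range (n + 1), g a b =
      (∏ a ∈ range n, ∏ b ∈ range n, g a b) * (∏ a ∈ range n, g a n) *
        ((∏ b ∈ range n, g n b) * g n n) := by
  simp only [prod_range_succ, prod_mul_distrib, mul_mul_mul_comm]

theorem tendsto_affine_div_affine (a b c d : ℝ) (hc : c ≠ 0) :
    Tendsto (fun x : ℝ => (a * x + b) / (c * x + d)) atTop (𝓝 (a / c)) := by
  have hlim (p q : ℝ) : Tendsto (fun x : ℝ => p + q / x) atTop (𝓝 p) := by
    simpa using tendsto_const_nhds.add ((tendsto_const_nhds (x := q)).div_atTop tendsto_id)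
  refine ((hlim a b).div (hlim c d) hc).congr' ?_
  filter_upwards [eventually_ne_atTop 0] with x hx
  show (a + b / x) / (c + d / x) = _
  rw [← mul_div_mul_right _ _ hx]
  congr 1 <;> field_simp

noncomputable def appendFactor (n : ℕ) (k l : ℕ → ℝ) (a b : ℝ) : ℝ :=
  ((n : ℝ) + 1 + (∑ r ∈ range n, (k r + l r) + (a + b))) / (1 + a + b) *
    ∏ r ∈ range n, (k r - a) * (l r - b) / ((1 + k r + b) * (1 + a + l r))

theorem F_append (n : ℕ) (hn : n ≠ 0) (k l : ℕ → ℝ) (a b : ℝ)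
    (hsum : (n : ℝ) + ∑ r ∈ range n, (k r + l r) ≠ 0) :
    F n (fun m => if m = n then a else k m) (fun m => if m = n then b else l m) =
      n / (n + ∑ r ∈ range n, (k r + l r)) * F (n - 1) k l * appendFactor n k l a b := by
  obtain ⟨m, rfl⟩ : ∃ m, n = m + 1 := ⟨n - 1, by omega⟩
  unfold F appendFactor
  rw [prod_range_succ_prod_Ioo, prod_range_succ_prod_range_succ, sum_range_succ]
  simp +contextual (disch := grind) only [if_neg, if_pos, Nat.add_sub_cancel]
  generalize ∑ x ∈ range (m + 1), (k x + l x) = S at hsum ⊢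
  generalize ∏ x ∈ range (m + 1), ∏ y ∈ Ioo x (m + 1), (k x - k y) * (l x - l y) = P
  generalize ∏ x ∈ range (m + 1), ∏ y ∈ range (m + 1), (1 + k x + l y) = D
  simp only [prod_div_distrib, prod_mul_distrib, Nat.factorial_succ]
  push_cast at hsum ⊢
  have hcancel : ((m : ℝ) + 1) / (m + 1 + S) * (m ! * (m + 1 + S) * P / D) =
      (m + 1) * m ! * P / D := by
    field_simp
  rw [hcancel]
  simp only [div_eq_mul_inv, mul_inv]
  ring

theorem tendsto_appendFactor (n : ℕ) (k l : ℕ → ℝ) :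
    Tendsto (fun x : ℝ => appendFactor n k l x (x + 1)) atTop (𝓝 1) := by
  have hfirst : Tendsto (fun x : ℝ => (2 * x + (n + 2 + ∑ r ∈ range n, (k r + l r))) / (2 * x + 2))
      atTop (𝓝 1) := by
    simpa using tendsto_affine_div_affine 2 (n + 2 + ∑ r ∈ range n, (k r + l r)) 2 2 two_ne_zero
  have hfactor (r : ℕ) : Tendsto (fun x : ℝ =>
      (-1 * x + k r) / (1 * x + (2 + k r)) * ((-1 * x + (l r - 1)) / (1 * x + (1 + l r))))
      atTop (𝓝 1) := by
    simpa using (tendsto_affine_div_affine (-1) (k r) 1 (2 + k r) one_ne_zero).mul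
      (tendsto_affine_div_affine (-1) (l r - 1) 1 (1 + l r) one_ne_zero)
  have hprod := hfirst.mul (tendsto_finsetProd (range n) fun r _ => hfactor r)
  rw [prod_const_one, mul_one] at hprod
  refine hprod.congr fun x => ?_
  rw [appendFactor]
  congr 1
  · ring
  · refine prod_congr rfl fun r _ => ?_
    rw [div_mul_div_comm]
    ring

theorem F_limit_append_general (n : ℕ) (hn : 2 ≤ n) (k l : ℕ → ℝ)
    (hsum : (n : ℝ) + ∑ r ∈ Finset.range n, (k r + l r) ≠ 0) :
    Tendsto
      (fun x : ℝ =>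
        F n (fun m => if m = n then x else k m) (fun m => if m = n then x + 1 else l m))
      atTop
      (nhds (((n : ℝ) / ((n : ℝ) + ∑ r ∈ Finset.range n, (k r + l r))) *
        F (n - 1) k l)) := by
  have h := (tendsto_appendFactor n k l).const_mul
    ((n : ℝ) / (n + ∑ r ∈ range n, (k r + l r)) * F (n - 1) k l)
  rw [mul_one] at h
  exact h.congr fun x => (F_append n (by omega) k l x (x + 1) hsum).symm

/-- The constant-term identity: appending the pair `(x, x+1)` to the index lists and
letting `x → ∞`, the closed formula `F_n` tends to `(n / (n + Σ)) · F_{n-1}`. -/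
theorem F_limit_append (n : ℕ) (hn : 2 ≤ n) (k l : ℕ → ℝ)
    (hne : ∀ r s, r < n → s < n → 1 + k r + l s ≠ 0)
    (hsum : (n : ℝ) + ∑ r ∈ Finset.range n, (k r + l r) ≠ 0) :
    Tendsto
      (fun x : ℝ =>
        F n (fun m => if m = n then x else k m) (fun m => if m = n then x + 1 else l m))
      atTop
      (nhds (((n : ℝ) / ((n : ℝ) + ∑ r ∈ Finset.range n, (k r + l r))) *
        F (n - 1) k l)) :=
  F_limit_append_general n hn k l hsum
end

section
/- Let n ≥ 1. Suppose R_1, R_2, …, R_n are families of real numbers, where R_m is defined on pairs of lists (I,J) with I = (i_0,…,i_m) consisting of even natural numbers and J = (j_0,…,j_m) consisting of odd natural numbers, satisfying: (base) R_1((i_0,i_1),(j_0,j_1)) = 1/(1+i_0+i_1) + 1/(2(1+i_0+j_0)) + 1/(2(1+i_1+j_0)) + 1/(2(1+i_0+j_1)) + 1/(2(1+i_1+j_1)) + 1/(1+j_0+j_1); and (recursion) R_m(I,J) = - Σ_{r=0}^{m} [ Σ_{k≠r} R_{m-1}(I_{r,k}, J')·(1/(i_k+i_r+1) + 1/(i_k+j_0+1))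 + Σ_{l=1}^{m} R_{m-1}(I_r, J'_l)·(1/(j_l+i_r+1) + 1/(j_l+j_0+1)) ], where I_r deletes i_r from I, I_{r,k} additionally replaces i_k by i_k+i_r+j_0+1, J' = (j_1,…,j_m), and J'_l replaces j_l in J' by j_l+i_r+j_0+1 (note all modified entries retain the required parities). Then (-1)^{n-1} R_n(I,J) > 0 for all such (I,J); in particular R_n(I,J) ≠ 0. -/
open Finset

/-- Sign and positivity of the remainders `R_n(I,J)` for `V_{n/2}`: given families
`R m` on pairs of lists (of length `m+1`, with even `I`-entries and odd `J`-entries)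
satisfying the base formula for `m = 1` and the stated recursion for `m ≥ 2`, we have
`(-1)^(n-1) R_n(I,J) > 0`; in particular `R_n(I,J) ≠ 0`. -/
theorem remainder_sign_fermionic (R : ℕ → List ℕ → List ℕ → ℝ)
    (hbase : ∀ i0 i1 j0 j1 : ℕ, Even i0 → Even i1 → Odd j0 → Odd j1 →
      R 1 [i0, i1] [j0, j1] =
        1 / (1 + (i0 : ℝ) + i1)
          + 1 / (2 * (1 + (i0 : ℝ) + j0)) + 1 / (2 * (1 + (i1 : ℝ) + j0))
          + 1 / (2 * (1 + (i0 : ℝ) + j1)) + 1 / (2 * (1 + (i1 : ℝ) + j1))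
          + 1 / (1 + (j0 : ℝ) + j1))
    (hrec : ∀ m : ℕ, 2 ≤ m → ∀ I J : List ℕ,
      I.length = m + 1 → J.length = m + 1 →
      (∀ x ∈ I, Even x) → (∀ x ∈ J, Odd x) →
      R m I J =
        - ∑ r ∈ Finset.range (m + 1),
            ((∑ k ∈ Finset.range (m + 1),
                if k = r then 0 else
                  R (m - 1)
                      ((I.set k (I.getD k 0 + I.getD r 0 + J.getD 0 0 + 1)).eraseIdx r)
                      J.tail *
                    (1 / ((I.getD k 0 : ℝ) + I.getD r 0 + 1)
                      + 1 / ((I.getD k 0 : ℝ) + J.getD 0 0 + 1)))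
              + ∑ l ∈ Finset.range m,
                  R (m - 1) (I.eraseIdx r)
                      (J.tail.set l (J.tail.getD l 0 + I.getD r 0 + J.getD 0 0 + 1)) *
                    (1 / ((J.tail.getD l 0 : ℝ) + I.getD r 0 + 1)
                      + 1 / ((J.tail.getD l 0 : ℝ) + J.getD 0 0 + 1)))) :
    ∀ n : ℕ, 1 ≤ n → ∀ I J : List ℕ,
      I.length = n + 1 → J.length = n + 1 →
      (∀ x ∈ I, Even x) → (∀ x ∈ J, Odd x) →
      0 < (-1 : ℝ) ^ (n - 1) * R n I J ∧ R n I J ≠ 0 := by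

  have getD_mem : ∀ (L : List ℕ) (k : ℕ), k < L.length → L.getD k 0 ∈ L := by
    intro L k hk
    rw [List.getD_eq_getElem L 0 hk]
    exact List.getElem_mem hk
  suffices key : ∀ n : ℕ, 1 ≤ n → ∀ I J : List ℕ,
      I.length = n + 1 → J.length = n + 1 →
      (∀ x ∈ I, Even x) → (∀ x ∈ J, Odd x) →
      0 < (-1 : ℝ) ^ (n - 1) * R n I J by
    intro n hn I J hI hJ hIe hJo
    have h := key n hn I J hI hJ hIe hJo
    refine ⟨h, fun h0 => ?_⟩
    rw [h0, mul_zero] at h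
    exact lt_irrefl 0 h
  intro n hn
  induction n, hn using Nat.le_induction with
  | base =>
    intro I J hI hJ hIe hJo
    obtain ⟨i0, i1, rfl⟩ : ∃ a b, I = [a, b] := by
      match I, hI with
      | [a, b], _ => exact ⟨a, b, rfl⟩
    obtain ⟨j0, j1, rfl⟩ : ∃ a b, J = [a, b] := by
      match J, hJ with
      | [a, b], _ => exact ⟨a, b, rfl⟩
    rw [hbase i0 i1 j0 j1 (hIe _ (by simp)) (hIe _ (by simp))
      (hJo _ (by simp)) (hJo _ (by simp))]
    simp only [Nat.sub_self, pow_zero, one_mul]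
    positivity
  | succ m hm ih =>
    obtain ⟨p, rfl⟩ : ∃ p, m = p + 1 := ⟨m - 1, by omega⟩
    simp only [Nat.add_sub_cancel] at ih ⊢
    intro I J hI hJ hIe hJo
    rw [hrec (p + 2) (by omega) I J hI hJ hIe hJo]
    rw [show (p : ℕ) + 2 - 1 = p + 1 from by omega]
    rw [show ((-1 : ℝ)) ^ (p + 1) = -(-1) ^ p from by ring, neg_mul_neg]
    have hj0 : Odd (J.getD 0 0) := hJo _ (getD_mem J 0 (by omega))
    rw [Finset.mul_sum]
    refine Finset.sum_pos ?_ ⟨0, Finset.mem_range.2 (by omega)⟩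
    intro r hr
    rw [Finset.mem_range] at hr
    have her : Even (I.getD r 0) := hIe _ (getD_mem I r (by omega))
    rw [mul_add]
    refine add_pos_of_nonneg_of_pos ?_ ?_
    · rw [Finset.mul_sum]
      refine Finset.sum_nonneg ?_
      intro k hk
      rw [Finset.mem_range] at hk
      by_cases hkr : k = r
      · simp [hkr]
      · rw [if_neg hkr, ← mul_assoc]
        have hek : Even (I.getD k 0) := hIe _ (getD_mem I k (by omega))
        have hR := ih ((I.set k (I.getD k 0 + I.getD r 0 + J.getD 0 0 + 1)).eraseIdx r)
          J.tail ?_ ?_ ?_ ?_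
        · exact le_of_lt (mul_pos hR (by positivity))
        · rw [List.length_eraseIdx, List.length_set]
          simp [hI]
          omega
        · rw [List.length_tail, hJ]
          omega
        · intro x hx
          rcases List.mem_or_eq_of_mem_set (List.mem_of_mem_eraseIdx hx) with h | h
          · exact hIe x h
          · rw [h]
            exact ((hek.add her).add_odd hj0).add_one
        · exact fun x hx => hJo x (List.mem_of_mem_tail hx)
    · rw [Finset.mul_sum]
      refine Finset.sum_pos ?_ ⟨0, Finset.mem_range.2 (by omega)⟩
      intro l hl
      rw [Finset.mem_range] at hl
      have hjl : Odd (J.tail.getD l 0) := by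
        refine hJo _ (List.mem_of_mem_tail (getD_mem J.tail l ?_))
        rw [List.length_tail, hJ]
        omega
      rw [← mul_assoc]
      have hR := ih (I.eraseIdx r)
        (J.tail.set l (J.tail.getD l 0 + I.getD r 0 + J.getD 0 0 + 1)) ?_ ?_ ?_ ?_
      · exact mul_pos hR (by positivity)
      · rw [List.length_eraseIdx]
        simp [hI]
        omega
      · rw [List.length_set, List.length_tail, hJ]
        omega
      · exact fun x hx => hIe x (List.mem_of_mem_eraseIdx hx)
      · intro x hx
        rcases List.mem_or_eq_of_mem_set hx with h | h
        · exact hJo x (List.mem_of_mem_tail h)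
        · rw [h]
          exact ((hjl.add_even her).add_odd hj0).add_one
end
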